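/- For 0 < α < 1 and nonnegative reals ω^1,…,ω^n satisfying, for each 1 ≤ j ≤ n, the bound Σ_{k=1}^j a_{j-k}(ω^k - ω^{k-1}) ≤ Γ(2-α)τ^α(λ_1 ω^j + λ_2 ω^{j-1}) + Γ(2-α)τ^α g^j, summation against p_{n-j} yields ω^n - ω^0 ≤ Γ(2-α)τ^α Σ_{j=1}^n p_{n-j}(λ_1 ω^j + λ_2 ω^{j-1}) + (t_n^α/Γ(1+α)) max_{1≤j≤n} g^j. -/

import Mathlib

/-!
Multiply the `j`-th inequality by `p (n - j) ≥ 0` and sum. Exchanging the order of summation,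
the identity `∑_{j=k}^n p_{n-j} a_{j-k} = 1` collapses the left side to the telescoping sum
`ω n - ω 0`. The `g`-terms are controlled by `Γ(2-α) ∑_j p_{n-j} ≤ n^α / Γ(1+α)`, which follows
from the same identity once `Γ(1+α) Γ(2-α) ≤ ∑_{k=1}^j a_{j-k} (k^α - (k-1)^α)` is known. For the
latter, write `Γ(α) Γ(1-α) = ∫_0^j s^(α-1) (j-s)^(-α) ds`, split it over the unit intervals
`[k-1, k]`, and bound each piece by Chebyshev's integral inequality for the decreasing factor
`s^(α-1)` and the increasing factor `(j-s)^(-α)`.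
-/

open Real Finset MeasureTheory intervalIntegral

namespace Finset

lemma sum_Icc_one_eq_sum_range {M : Type*} [AddCommMonoid M] (f : ℕ → M) (n : ℕ) :
    ∑ k ∈ Icc 1 n, f k = ∑ i ∈ range n, f (i + 1) := by
  rw [← Ico_add_one_right_eq_Icc, sum_Ico_eq_sum_range]
  simp only [add_tsub_cancel_right, add_comm 1]

lemma sum_Icc_one_sub_pred {G : Type*} [AddCommGroup G] (f : ℕ → G) (n : ℕ) :
    ∑ k ∈ Icc 1 n, (f k - f (k - 1)) = f n - f 0 := by
  simpa only [sum_Icc_one_eq_sum_range, add_tsub_cancel_right] using sum_range_sub f n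

end Finset

section ComplementaryKernel

variable {a p : ℕ → ℝ}

lemma complementaryKernel_succ
    (hp : ∀ n : ℕ, 1 ≤ n → p n = ∑ j ∈ Icc 1 n, (a (j - 1) - a j) * p (n - j)) (m : ℕ) :
    p (m + 1) = ∑ i ∈ range (m + 1), (a i - a (i + 1)) * p (m - i) := by
  rw [hp (m + 1) m.succ_pos, sum_Icc_one_eq_sum_range]
  refine sum_congr rfl fun i _ => ?_
  rw [add_tsub_cancel_right, Nat.add_sub_add_right]

lemma complementaryKernel_nonneg (ha : ∀ i, a (i + 1) ≤ a i) (hp0 : p 0 = 1)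
    (hp : ∀ n : ℕ, 1 ≤ n → p n = ∑ j ∈ Icc 1 n, (a (j - 1) - a j) * p (n - j)) (m : ℕ) :
    0 ≤ p m := by
  induction m using Nat.strong_induction_on with
  | _ m ih =>
    rcases m with _ | m
    · rw [hp0]; exact zero_le_one
    · rw [complementaryKernel_succ hp]
      exact sum_nonneg fun i _ => mul_nonneg (sub_nonneg.2 (ha i)) (ih _ (by omega))

lemma sum_range_complementaryKernel_mul (ha0 : a 0 = 1) (hp0 : p 0 = 1)
    (hp : ∀ n : ℕ, 1 ≤ n → p n = ∑ j ∈ Icc 1 n, (a (j - 1) - a j) * p (n - j)) (m : ℕ) :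
    ∑ i ∈ range (m + 1), p (m - i) * a i = 1 := by
  induction m with
  | zero => simp [hp0, ha0]
  | succ m ih =>
    rw [sum_range_succ', Nat.sub_zero, ha0, mul_one, complementaryKernel_succ hp, ← ih,
      ← sum_add_distrib]
    refine sum_congr rfl fun i _ => ?_
    rw [Nat.add_sub_add_right]
    ring

lemma sum_Icc_complementaryKernel_mul (ha0 : a 0 = 1) (hp0 : p 0 = 1)
    (hp : ∀ n : ℕ, 1 ≤ n → p n = ∑ j ∈ Icc 1 n, (a (j - 1) - a j) * p (n - j))
    {k n : ℕ} (hkn : k ≤ n) :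
    ∑ j ∈ Icc k n, p (n - j) * a (j - k) = 1 := by
  rw [← Ico_add_one_right_eq_Icc, sum_Ico_eq_sum_range, Nat.sub_add_comm hkn,
    ← sum_range_complementaryKernel_mul ha0 hp0 hp (n - k)]
  refine sum_congr rfl fun i _ => ?_
  rw [Nat.add_sub_cancel_left, Nat.sub_sub]

lemma sum_complementaryKernel_mul_sum (ha0 : a 0 = 1) (hp0 : p 0 = 1)
    (hp : ∀ n : ℕ, 1 ≤ n → p n = ∑ j ∈ Icc 1 n, (a (j - 1) - a j) * p (n - j))
    (F : ℕ → ℝ) (n : ℕ) :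
    ∑ j ∈ Icc 1 n, p (n - j) * ∑ k ∈ Icc 1 j, a (j - k) * F k = ∑ k ∈ Icc 1 n, F k := by
  simp_rw [mul_sum]
  rw [sum_comm' (t' := Icc 1 n) (s' := fun k => Icc k n)
    (fun j k => by simp only [mem_Icc]; omega)]
  refine sum_congr rfl fun k hk => ?_
  simp_rw [← mul_assoc]
  rw [← sum_mul, sum_Icc_complementaryKernel_mul ha0 hp0 hp (mem_Icc.1 hk).2, one_mul]

end ComplementaryKernel

noncomputable def caputoL1Coeff (α : ℝ) (i : ℕ) : ℝ := ((i : ℝ) + 1) ^ (1 - α) - (i : ℝ) ^ (1 - α)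

namespace caputoL1Coeff

variable {α : ℝ}

lemma zero (hα1 : α < 1) : caputoL1Coeff α 0 = 1 := by
  simp [caputoL1Coeff, zero_rpow (sub_pos.2 hα1).ne']

lemma succ_le (hα0 : 0 < α) (hα1 : α < 1) (i : ℕ) :
    caputoL1Coeff α (i + 1) ≤ caputoL1Coeff α i := by
  have hconc := (strictConcaveOn_rpow (sub_pos.2 hα1) (by linarith)).concaveOn.2
    (Set.mem_Ici.2 (Nat.cast_nonneg' i)) (Set.mem_Ici.2 (by positivity : (0 : ℝ) ≤ i + 2))
    (by norm_num : (0 : ℝ) ≤ 1 / 2) (by norm_num : (0 : ℝ) ≤ 1 / 2) (by norm_num)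
  simp only [smul_eq_mul] at hconc
  rw [show 1 / 2 * (i : ℝ) + 1 / 2 * (i + 2) = i + 1 by ring] at hconc
  simp only [caputoL1Coeff, Nat.cast_succ, add_assoc, one_add_one_eq_two]
  linarith

end caputoL1Coeff

lemma intervalIntegrable_rpow_mul_rpow_sub {a b J : ℝ} (ha : 0 < a) (hb : 0 < b) (hJ : 0 < J) :
    IntervalIntegrable (fun s => s ^ (a - 1) * (J - s) ^ (b - 1)) volume 0 J := by
  refine IntervalIntegrable.trans (b := J / 2) ?_ ?_
  · refine (intervalIntegrable_rpow' (by linarith)).mul_continuousOn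
      (ContinuousOn.rpow_const (by fun_prop) fun s hs => Or.inl ?_)
    rw [Set.uIcc_of_le (by linarith)] at hs
    linarith [hs.2]
  · have hsub : IntervalIntegrable (fun s => (J - s) ^ (b - 1)) volume (J / 2) J := by
      have := (intervalIntegrable_rpow' (a := J / 2) (b := 0)
        (by linarith : -1 < b - 1)).comp_sub_left J
      rwa [sub_half, sub_zero] at this
    refine hsub.continuousOn_mul
      (ContinuousOn.rpow_const (by fun_prop) fun s hs => Or.inl ?_)
    rw [Set.uIcc_of_le (by linarith)] at hs
    linarith [hs.1]

lemma integral_rpow_mul_rpow_sub {a b J : ℝ} (ha : 0 < a) (hb : 0 < b) (hJ : 0 < J) :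
    ∫ s in 0..J, s ^ (a - 1) * (J - s) ^ (b - 1) =
      J ^ (a + b - 1) * (Gamma a * Gamma b / Gamma (a + b)) := by
  have hbeta := Complex.betaIntegral_scaled a b hJ
  rw [Complex.betaIntegral_eq_Gamma_mul_div _ _ (by simpa) (by simpa)] at hbeta
  apply Complex.ofReal_injective
  rw [← intervalIntegral.integral_ofReal, Complex.ofReal_mul, Complex.ofReal_cpow hJ.le,
    Complex.ofReal_div, Complex.ofReal_mul, ← Complex.Gamma_ofReal, ← Complex.Gamma_ofReal,
    ← Complex.Gamma_ofReal]
  push_cast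
  rw [← hbeta]
  refine intervalIntegral.integral_congr fun s hs => ?_
  rw [Set.uIcc_of_le hJ.le] at hs
  simp only [Complex.ofReal_cpow hs.1, Complex.ofReal_cpow (sub_nonneg.2 hs.2)]
  push_cast
  rfl

lemma integral_mul_le_mul_integral_of_pivot {f g : ℝ → ℝ} {x y F G : ℝ} (hxy : x ≤ y)
    (hf : IntervalIntegrable f volume x y) (hg : IntervalIntegrable g volume x y)
    (hfg : IntervalIntegrable (fun s => f s * g s) volume x y)
    (hG : ∫ s in x..y, g s = (y - x) * G)
    (hpivot : ∀ s ∈ Set.Ioo x y, (f s - F) * (g s - G) ≤ 0) :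
    ∫ s in x..y, f s * g s ≤ G * ∫ s in x..y, f s := by
  have hlin : IntervalIntegrable (fun s => G * f s + F * g s - F * G) volume x y :=
    ((hf.const_mul G).add (hg.const_mul F)).sub intervalIntegrable_const
  have hae : (fun s => f s * g s) ≤ᵐ[volume.restrict (Set.Icc x y)]
      fun s => G * f s + F * g s - F * G := by
    rw [← Measure.restrict_congr_set Ioo_ae_eq_Icc]
    filter_upwards [ae_restrict_mem measurableSet_Ioo] with s hs
    linarith [hpivot s hs]
  calc ∫ s in x..y, f s * g s ≤ ∫ s in x..y, (G * f s + F * g s - F * G) :=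
        integral_mono_ae_restrict hxy hfg hlin hae
    _ = G * ∫ s in x..y, f s := by
        rw [integral_sub ((hf.const_mul G).add (hg.const_mul F)) intervalIntegrable_const,
          integral_add (hf.const_mul G) (hg.const_mul F), intervalIntegral.integral_const_mul,
          intervalIntegral.integral_const_mul, hG, intervalIntegral.integral_const, smul_eq_mul]
        ring

lemma mul_rpow_neg_lt_rpow_sub_rpow_sub_one {β x : ℝ} (hβ0 : 0 < β) (hβ1 : β < 1) (hx : 1 ≤ x) :
    β * x ^ (β - 1) < x ^ β - (x - 1) ^ β := by
  have hx0 : 0 < x := by linarith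
  have hbern := rpow_one_add_lt_one_add_mul_self (s := -x⁻¹)
    (by linarith [inv_le_one_of_one_le₀ hx]) (by simpa using hx0.ne') hβ0 hβ1
  have hsplit : x - 1 = x * (1 + -x⁻¹) := by
    rw [mul_add, mul_one, mul_neg, mul_inv_cancel₀ hx0.ne', sub_eq_add_neg]
  have hpow : x ^ (β - 1) = x ^ β * x⁻¹ := by rw [rpow_sub_one hx0.ne', div_eq_mul_inv]
  rw [hsplit, mul_rpow hx0.le (by linarith [inv_le_one_of_one_le₀ hx]), hpow]
  nlinarith [rpow_pos_of_pos hx0 β]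

section UnitInterval

variable {α J u : ℝ}

lemma integral_sub_rpow_neg (hα1 : α < 1) :
    ∫ s in u..u + 1, (J - s) ^ (-α) = ((J - u) ^ (1 - α) - (J - u - 1) ^ (1 - α)) / (1 - α) := by
  rw [intervalIntegral.integral_comp_sub_left (fun s => s ^ (-α)) J,
    integral_rpow (Or.inl (by linarith)), show -α + 1 = 1 - α by ring,
    show J - (u + 1) = J - u - 1 by ring]

lemma integral_rpow_sub_one (hα0 : 0 < α) :
    ∫ s in u..u + 1, s ^ (α - 1) = ((u + 1) ^ α - u ^ α) / α := by
  rw [integral_rpow (Or.inl (by linarith)), sub_add_cancel]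

lemma integral_rpow_mul_sub_rpow_le (hα0 : 0 < α) (hα1 : α < 1) (hu : 0 ≤ u) (huJ : u + 1 ≤ J) :
    ∫ s in u..u + 1, s ^ (α - 1) * (J - s) ^ (-α) ≤
      (∫ s in u..u + 1, (J - s) ^ (-α)) * ∫ s in u..u + 1, s ^ (α - 1) := by
  set m := ∫ s in u..u + 1, (J - s) ^ (-α) with hm
  have hJ : 0 < J := by linarith
  have hm_gt : J ^ (-α) < m := by
    have hmean := mul_rpow_neg_lt_rpow_sub_rpow_sub_one (sub_pos.2 hα1) (by linarith)
      (by linarith : 1 ≤ J - u)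
    rw [show 1 - α - 1 = -α by ring] at hmean
    rw [hm, integral_sub_rpow_neg hα1, lt_div_iff₀ (sub_pos.2 hα1)]
    calc J ^ (-α) * (1 - α) ≤ (1 - α) * (J - u) ^ (-α) := by
          rw [mul_comm]
          exact mul_le_mul_of_nonneg_left
            (rpow_le_rpow_of_nonpos (by linarith) (by linarith) (by linarith)) (by linarith)
      _ < _ := hmean
  have hm_pos : 0 < m := (rpow_pos_of_pos hJ _).trans hm_gt
  -- the pivot `c` is where `(J - ·) ^ (-α)` attains its mean value `m` on `[u, u + 1]`
  set c := J - m ^ (-α⁻¹) with hc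
  have hJc : (J - c) ^ (-α) = m := by
    rw [hc, sub_sub_cancel, ← rpow_mul hm_pos.le, neg_mul_neg, inv_mul_cancel₀ hα0.ne', rpow_one]
  have hcJ : c < J := by rw [hc]; linarith [rpow_pos_of_pos hm_pos (-α⁻¹)]
  have hc0 : 0 < c := by
    have := rpow_lt_rpow_of_neg (rpow_pos_of_pos hJ _) hm_gt (neg_lt_zero.2 (inv_pos.2 hα0))
    rw [← rpow_mul hJ.le, neg_mul_neg, mul_inv_cancel₀ hα0.ne', rpow_one] at this
    rw [hc]; linarith
  have hfg : IntervalIntegrable (fun s => s ^ (α - 1) * (J - s) ^ (-α)) volume u (u + 1) := by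
    have := intervalIntegrable_rpow_mul_rpow_sub hα0 (sub_pos.2 hα1) hJ
    rw [show 1 - α - 1 = -α by ring] at this
    refine this.mono_set ?_
    rw [Set.uIcc_of_le (by linarith), Set.uIcc_of_le hJ.le]
    exact Set.Icc_subset_Icc hu huJ
  have hg : IntervalIntegrable (fun s => (J - s) ^ (-α)) volume u (u + 1) := by
    have := (intervalIntegrable_rpow' (a := J - u) (b := J - (u + 1))
      (by linarith : -1 < -α)).comp_sub_left J
    rwa [sub_sub_cancel, sub_sub_cancel] at this
  refine integral_mul_le_mul_integral_of_pivot (F := c ^ (α - 1)) (by linarith)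
    (intervalIntegrable_rpow' (by linarith)) hg hfg (by rw [add_sub_cancel_left, one_mul])
    fun s hs => ?_
  have hs0 : 0 < s := by linarith [hs.1]
  have hsJ : s < J := by linarith [hs.2]
  rcases le_total s c with hsc | hcs
  · refine mul_nonpos_of_nonneg_of_nonpos ?_ ?_
    · exact sub_nonneg.2 (rpow_le_rpow_of_nonpos hs0 hsc (by linarith))
    · rw [sub_nonpos, ← hJc]
      exact rpow_le_rpow_of_nonpos (by linarith) (by linarith) (by linarith)
  · refine mul_nonpos_of_nonpos_of_nonneg ?_ ?_
    · exact sub_nonpos.2 (rpow_le_rpow_of_nonpos hc0 hcs (by linarith))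
    · rw [sub_nonneg, ← hJc]
      exact rpow_le_rpow_of_nonpos (by linarith) (by linarith) (by linarith)

end UnitInterval

lemma gamma_one_add_mul_gamma_two_sub_le {α : ℝ} (hα0 : 0 < α) (hα1 : α < 1) {j : ℕ} (hj : 1 ≤ j) :
    Gamma (1 + α) * Gamma (2 - α) ≤
      ∑ k ∈ Icc 1 j, caputoL1Coeff α (j - k) * ((k : ℝ) ^ α - ((k - 1 : ℕ) : ℝ) ^ α) := by
  set J : ℝ := (j : ℝ) with hJdef
  have hJ : 0 < J := by simp only [J]; exact_mod_cast hj
  have h1α : 0 < 1 - α := sub_pos.2 hα1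
  have hbeta : ∫ s in 0..J, s ^ (α - 1) * (J - s) ^ (-α) = Gamma α * Gamma (1 - α) := by
    have := integral_rpow_mul_rpow_sub hα0 h1α hJ
    rwa [add_sub_cancel, sub_self, rpow_zero, one_mul, Gamma_one, div_one,
      show 1 - α - 1 = -α by ring] at this
  have hsplit : ∑ i ∈ range j, ∫ s in (i : ℝ)..(i + 1 : ℕ), s ^ (α - 1) * (J - s) ^ (-α) =
      ∫ s in 0..J, s ^ (α - 1) * (J - s) ^ (-α) := by
    have hint := intervalIntegrable_rpow_mul_rpow_sub hα0 h1α hJ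
    rw [show 1 - α - 1 = -α by ring] at hint
    rw [sum_integral_adjacent_intervals fun i hi => hint.mono_set ?_, Nat.cast_zero]
    rw [Set.uIcc_of_le (by push_cast; linarith), Set.uIcc_of_le hJ.le]
    exact Set.Icc_subset_Icc (Nat.cast_nonneg i) (by simp only [J]; exact_mod_cast hi)
  have hGamma : Gamma (1 + α) * Gamma (2 - α) = α * (1 - α) * (Gamma α * Gamma (1 - α)) := by
    rw [add_comm, Gamma_add_one hα0.ne', show 2 - α = 1 - α + 1 by ring,
      Gamma_add_one h1α.ne']
    ring
  rw [hGamma, ← hbeta, ← hsplit, mul_sum, sum_Icc_one_eq_sum_range]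
  refine sum_le_sum fun i hi => ?_
  have hij : i + 1 ≤ j := mem_range.1 hi
  have hiJ : (i : ℝ) + 1 ≤ J := by simp only [J]; exact_mod_cast hij
  have hcoeff : caputoL1Coeff α (j - (i + 1)) = (J - i) ^ (1 - α) - (J - i - 1) ^ (1 - α) := by
    rw [hJdef, caputoL1Coeff, Nat.cast_sub hij]
    push_cast
    ring_nf
  calc α * (1 - α) * ∫ s in (i : ℝ)..(i + 1 : ℕ), s ^ (α - 1) * (J - s) ^ (-α)
      ≤ α * (1 - α) * ((∫ s in (i : ℝ)..i + 1, (J - s) ^ (-α)) *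
          ∫ s in (i : ℝ)..i + 1, s ^ (α - 1)) := by
        push_cast
        exact mul_le_mul_of_nonneg_left
          (integral_rpow_mul_sub_rpow_le hα0 hα1 (Nat.cast_nonneg i) hiJ) (by positivity)
    _ = _ := by
        rw [integral_sub_rpow_neg hα1, integral_rpow_sub_one hα0, hcoeff, Nat.add_sub_cancel]
        field_simp
        push_cast
        ring

lemma gamma_two_sub_mul_sum_complementaryKernel_le {α : ℝ} (hα0 : 0 < α) (hα1 : α < 1) {p : ℕ → ℝ}
    (hp0 : p 0 = 1)
    (hp : ∀ n : ℕ, 1 ≤ n →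
      p n = ∑ j ∈ Icc 1 n, (caputoL1Coeff α (j - 1) - caputoL1Coeff α j) * p (n - j))
    (n : ℕ) :
    Gamma (2 - α) * ∑ j ∈ Icc 1 n, p (n - j) ≤ (n : ℝ) ^ α / Gamma (1 + α) := by
  have hpos := complementaryKernel_nonneg (caputoL1Coeff.succ_le hα0 hα1) hp0 hp
  rw [le_div_iff₀ (Gamma_pos_of_pos (by linarith))]
  calc Gamma (2 - α) * (∑ j ∈ Icc 1 n, p (n - j)) * Gamma (1 + α)
      = ∑ j ∈ Icc 1 n, p (n - j) * (Gamma (1 + α) * Gamma (2 - α)) := by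
        rw [mul_comm, ← mul_assoc, mul_sum]
        exact sum_congr rfl fun j _ => by ring
    _ ≤ ∑ j ∈ Icc 1 n, p (n - j) *
          ∑ k ∈ Icc 1 j, caputoL1Coeff α (j - k) * ((k : ℝ) ^ α - ((k - 1 : ℕ) : ℝ) ^ α) :=
        sum_le_sum fun j hj => mul_le_mul_of_nonneg_left
          (gamma_one_add_mul_gamma_two_sub_le hα0 hα1 (mem_Icc.1 hj).1) (hpos _)
    _ = (n : ℝ) ^ α := by
        rw [sum_complementaryKernel_mul_sum (caputoL1Coeff.zero hα1) hp0 hp,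
          sum_Icc_one_sub_pred (fun k : ℕ => (k : ℝ) ^ α), Nat.cast_zero, zero_rpow hα0.ne',
          sub_zero]

theorem stmt_16_general (α : ℝ) (hα0 : 0 < α) (hα1 : α < 1)
    (τ : ℝ) (hτ : 0 < τ)
    (a : ℕ → ℝ) (ha : ∀ i : ℕ, a i = ((i : ℝ) + 1) ^ (1 - α) - (i : ℝ) ^ (1 - α))
    (p : ℕ → ℝ) (hp0 : p 0 = 1)
    (hp : ∀ n : ℕ, 1 ≤ n → p n = ∑ j ∈ Finset.Icc 1 n, (a (j - 1) - a j) * p (n - j))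
    (lam1 lam2 : ℝ)
    (ω g : ℕ → ℝ) (hg : ∀ j, 0 ≤ g j)
    (n : ℕ) (hn : 1 ≤ n)
    (hineq : ∀ j : ℕ, 1 ≤ j → j ≤ n →
      ∑ k ∈ Finset.Icc 1 j, a (j - k) * (ω k - ω (k - 1))
        ≤ Real.Gamma (2 - α) * τ ^ α * (lam1 * ω j + lam2 * ω (j - 1)) +
          Real.Gamma (2 - α) * τ ^ α * g j) :
    ω n - ω 0 ≤ Real.Gamma (2 - α) * τ ^ α *
        ∑ j ∈ Finset.Icc 1 n, p (n - j) * (lam1 * ω j + lam2 * ω (j - 1)) +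
      (((n : ℝ) * τ) ^ α / Real.Gamma (1 + α)) *
        ((Finset.Icc 1 n).sup' (Finset.nonempty_Icc.mpr hn) g) := by
  obtain rfl : a = caputoL1Coeff α := funext ha
  have hpos := complementaryKernel_nonneg (caputoL1Coeff.succ_le hα0 hα1) hp0 hp
  set G := (Icc 1 n).sup' (nonempty_Icc.mpr hn) g
  have hG0 : 0 ≤ G := (hg n).trans (le_sup' g (mem_Icc.2 ⟨hn, le_rfl⟩))
  set L : ℕ → ℝ := fun j => lam1 * ω j + lam2 * ω (j - 1)
  calc ω n - ω 0
      = ∑ j ∈ Icc 1 n, p (n - j) *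
          ∑ k ∈ Icc 1 j, caputoL1Coeff α (j - k) * (ω k - ω (k - 1)) := by
        rw [sum_complementaryKernel_mul_sum (caputoL1Coeff.zero hα1) hp0 hp, sum_Icc_one_sub_pred]
    _ ≤ ∑ j ∈ Icc 1 n, p (n - j) * (Gamma (2 - α) * τ ^ α * L j + Gamma (2 - α) * τ ^ α * G) := by
        refine sum_le_sum fun j hj => mul_le_mul_of_nonneg_left ?_ (hpos _)
        refine (hineq j (mem_Icc.1 hj).1 (mem_Icc.1 hj).2).trans ?_
        have hc : 0 ≤ Gamma (2 - α) * τ ^ α :=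
          mul_nonneg (Gamma_pos_of_pos (by linarith)).le (rpow_pos_of_pos hτ α).le
        exact add_le_add_right (mul_le_mul_of_nonneg_left (le_sup' g hj) hc) _
    _ = Gamma (2 - α) * τ ^ α * ∑ j ∈ Icc 1 n, p (n - j) * L j +
          τ ^ α * G * (Gamma (2 - α) * ∑ j ∈ Icc 1 n, p (n - j)) := by
        simp only [mul_sum, ← sum_add_distrib]
        exact sum_congr rfl fun j _ => by ring
    _ ≤ Gamma (2 - α) * τ ^ α * ∑ j ∈ Icc 1 n, p (n - j) * L j +
          τ ^ α * G * ((n : ℝ) ^ α / Gamma (1 + α)) := by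
        gcongr
        exact gamma_two_sub_mul_sum_complementaryKernel_le hα0 hα1 hp0 hp n
    _ = _ := by
        rw [mul_rpow (Nat.cast_nonneg n) hτ.le]
        ring

theorem stmt_16 (α : ℝ) (hα0 : 0 < α) (hα1 : α < 1)
    (τ : ℝ) (hτ : 0 < τ)
    (a : ℕ → ℝ) (ha : ∀ i : ℕ, a i = ((i : ℝ) + 1) ^ (1 - α) - (i : ℝ) ^ (1 - α))
    (p : ℕ → ℝ) (hp0 : p 0 = 1)
    (hp : ∀ n : ℕ, 1 ≤ n → p n = ∑ j ∈ Finset.Icc 1 n, (a (j - 1) - a j) * p (n - j))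
    (lam1 lam2 : ℝ) (hlam1 : 0 ≤ lam1) (hlam2 : 0 ≤ lam2)
    (ω g : ℕ → ℝ) (hω : ∀ j, 0 ≤ ω j) (hg : ∀ j, 0 ≤ g j)
    (n : ℕ) (hn : 1 ≤ n)
    (hineq : ∀ j : ℕ, 1 ≤ j → j ≤ n →
      ∑ k ∈ Finset.Icc 1 j, a (j - k) * (ω k - ω (k - 1))
        ≤ Real.Gamma (2 - α) * τ ^ α * (lam1 * ω j + lam2 * ω (j - 1)) +
          Real.Gamma (2 - α) * τ ^ α * g j) :
    ω n - ω 0 ≤ Real.Gamma (2 - α) * τ ^ α *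
        ∑ j ∈ Finset.Icc 1 n, p (n - j) * (lam1 * ω j + lam2 * ω (j - 1)) +
      (((n : ℝ) * τ) ^ α / Real.Gamma (1 + α)) *
        ((Finset.Icc 1 n).sup' (Finset.nonempty_Icc.mpr hn) g) :=
  stmt_16_general α hα0 hα1 τ hτ a ha p hp0 hp lam1 lam2 ω g hg n hn hineq
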